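/- Consider positive reals {τ_n}, {χ_n} and the counting processes A(t) = #{k : t_k ≤ t}, D(t) = #{k : x_k ≤ t}, where t_k = τ_1 + ⋯ + τ_k and x_k = χ_1 + ⋯ + χ_k. Let Q_1 be the queue-length of the system with autonomous service (Q_1(t) = A(t) - ∫_0^t 1{Q_1(s-) > 0} dD(s)) and let Q_3 be the queue-length of the delayed-departure system defined by (3.1) of the paper. Then for every t ≥ 0 and every sample path, 0 ≤ Q_3(t) - Q_1(t) ≤ 1. -/

import Mathlib

/-!
Write `D₁`, `D₃` for the sets of indices `k` at which `Q₁`, `Q₃` really depart at `x_k`, and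
`c_i(k)` for the number of such indices below `k`. Just before `x_k` both queues have seen the
same arrivals `L(k)`, so `Q_i(x_k-) = L(k) - c_i(k)`, and `x_k` is a departure of `Q₁` iff
`c₁(k) < L(k)`, while it is a departure of `Q₃` iff `c₃(k) < L(k)` and the departure is not
suppressed. Induction on `k` gives `c₃(k) ≤ c₁(k) ≤ c₃(k) + 1`: if `Q₁` departs and `Q₃` does not
while `c₁(k) = c₃(k) + 1`, the suppressing arrival found `Q₃` empty, so it is arrival number
`c₃(k) + 1`, and it came after `x_{k-1}`; but `Q₁` had already served `c₁(k) = c₃(k) + 1`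
customers by `x_{k-1}`, which is more than had arrived.
-/

open Filter Set Function Topology Nat

theorem strictMono_sum_range_succ {M : Type*} [AddCommMonoid M] [PartialOrder M]
    [AddLeftStrictMono M] {f : ℕ → M} (hf : ∀ n, 0 < f n) :
    StrictMono fun k => ∑ i ∈ Finset.range (k + 1), f i :=
  strictMono_nat_of_lt_succ fun n => by
    rw [Finset.sum_range_succ _ (n + 1)]
    exact lt_add_of_pos_right _ (hf _)

theorem StrictMono.encard_setOf_lt_le {t : ℕ → ℝ} (ht : StrictMono t) {s : ℝ} {i : ℕ}
    (hs : s ≤ t i) : {m | t m < s}.encard ≤ i :=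
  calc {m | t m < s}.encard ≤ (Iio i).encard :=
        encard_le_encard fun _ hm => ht.lt_iff_lt.1 (lt_of_lt_of_le hm hs)
    _ = i := by rw [encard_eq_coe_toFinset_card]; simp

section Count

variable {p q : ℕ → Prop} [DecidablePred p] [DecidablePred q]

theorem natCard_setOf_lt_and (n : ℕ) :
    Nat.card {k | k < n ∧ p k} = count p n := by
  rw [count_eq_card_filter_range, ← Nat.card_eq_finsetCard]
  congr
  ext
  simp

theorem count_le_natCard (hp : {k | p k}.Finite) (n : ℕ) : count p n ≤ Nat.card {k | p k} := by
  rw [Nat.card_eq_card_finite_toFinset hp]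
  exact count_le_card hp n

theorem exists_count_eq_natCard (hp : {k | p k}.Finite) :
    ∃ N, ∀ n ≥ N, count p n = Nat.card {k | p k} := by
  obtain ⟨N, hN⟩ := hp.bddAbove
  refine ⟨N + 1, fun n hn => ?_⟩
  rw [← natCard_setOf_lt_and]
  congr 2
  ext k
  simp only [mem_ofPred_eq, and_iff_right_iff_imp]
  exact fun hk => by have := hN hk; omega

theorem count_succ_le_of_forall_lt {L : ℕ → ℕ∞} (hL : Monotone L)
    (h : ∀ k, p k → (count p k : ℕ∞) < L k) (k : ℕ) : (count p (k + 1) : ℕ∞) ≤ L k := by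
  by_cases hk : p k
  · rw [count_succ_eq_succ_count_iff.2 hk, Nat.cast_succ]
    exact Order.add_one_le_of_lt (h k hk)
  · rw [count_succ_eq_count_iff.2 hk]
    cases k with
    | zero => simp
    | succ j => exact (count_succ_le_of_forall_lt hL h j).trans (hL j.le_succ)

theorem count_le_count_and_count_le_count_add_one {S : ℕ → Prop} {L : ℕ → ℕ∞} (hL : Monotone L)
    (hq : ∀ k, q k ↔ L k ≠ ⊤ ∧ (count q k : ℕ∞) < L k)
    (hp : ∀ k, p k ↔ (L k ≠ ⊤ ∧ (count p k : ℕ∞) < L k) ∧ ¬ S k)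
    (hS : ∀ j, S (j + 1) → L j ≤ count p (j + 1)) (n : ℕ) :
    count p n ≤ count q n ∧ count q n ≤ count p n + 1 := by
  induction n with
  | zero => simp
  | succ n ih =>
    simp only [count_succ]
    by_cases hqn : q n <;> by_cases hpn : p n <;> simp only [hqn, hpn, if_true, if_false]
    · omega
    · suffices count q n ≤ count p n by omega
      by_contra! hlt
      obtain ⟨hL_ne_top, hq_lt⟩ := (hq n).1 hqn
      have hp_lt : (count p n : ℕ∞) < L n := lt_trans (by exact_mod_cast hlt) hq_lt
      have hSn : S n := by_contra fun hSn => hpn ((hp n).2 ⟨⟨hL_ne_top, hp_lt⟩, hSn⟩)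
      cases n with
      | zero => simp at hlt
      | succ j =>
        have := (count_succ_le_of_forall_lt hL (fun k hk => ((hq k).1 hk).2) j).trans (hS j hSn)
        exact absurd this (not_le.2 (by exact_mod_cast hlt))
    · suffices count p n < count q n by omega
      by_contra! hle
      have heq : count q n = count p n := by omega
      exact hqn ((hq n).2 (heq ▸ ((hp n).1 hpn).1))
    · omega

theorem natCard_le_natCard_and_natCard_le_natCard_add_one
    (h : ∀ n, count p n ≤ count q n ∧ count q n ≤ count p n + 1) :
    Nat.card {k | p k} ≤ Nat.card {k | q k} ∧ Nat.card {k | q k} ≤ Nat.card {k | p k} + 1 := by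
  by_cases hp : {k | p k}.Finite <;> by_cases hq : {k | q k}.Finite
  · obtain ⟨Np, hNp⟩ := exists_count_eq_natCard hp
    obtain ⟨Nq, hNq⟩ := exists_count_eq_natCard hq
    rw [← hNp (max Np Nq) (le_max_left _ _), ← hNq (max Np Nq) (le_max_right _ _)]
    exact h _
  · obtain ⟨n, hn⟩ := surjective_count_of_infinite_setOfPred hq (Nat.card {k | p k} + 2)
    have := count_le_natCard hp n
    have := (h n).2
    omega
  · obtain ⟨n, hn⟩ := surjective_count_of_infinite_setOfPred hp (Nat.card {k | q k} + 1)
    have := count_le_natCard hq n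
    have := (h n).1
    omega
  · simp [Set.Infinite.card_eq_zero hp, Set.Infinite.card_eq_zero hq]

variable {α : Type*} [LinearOrder α] {x : ℕ → α}

theorem natCard_setOf_le_and_eq_count {s : α} {n : ℕ} (hs : ∀ j, x j ≤ s ↔ j < n) :
    Nat.card {j | x j ≤ s ∧ p j} = count p n := by
  simp_rw [hs]
  exact natCard_setOf_lt_and n

theorem Monotone.exists_forall_le_iff_lt_or_forall_le (hx : Monotone x) (s : α) :
    (∃ n, ∀ j, x j ≤ s ↔ j < n) ∨ ∀ j, x j ≤ s := by
  classical
  by_cases h : ∃ n, s < x n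
  · refine .inl ⟨Nat.find h, fun j => ⟨fun hj => ?_, fun hj => not_lt.1 (Nat.find_min h hj)⟩⟩
    by_contra! hle
    exact (Nat.find_spec h).not_ge ((hx hle).trans hj)
  · push Not at h
    exact .inr h

theorem natCard_setOf_le_and_le_and_le_add_one (hx : Monotone x)
    (h : ∀ n, count p n ≤ count q n ∧ count q n ≤ count p n + 1) (s : α) :
    Nat.card {k | x k ≤ s ∧ p k} ≤ Nat.card {k | x k ≤ s ∧ q k} ∧
      Nat.card {k | x k ≤ s ∧ q k} ≤ Nat.card {k | x k ≤ s ∧ p k} + 1 := by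
  rcases hx.exists_forall_le_iff_lt_or_forall_le s with ⟨n, hn⟩ | hall
  · rw [natCard_setOf_le_and_eq_count hn, natCard_setOf_le_and_eq_count hn]
    exact h n
  · simp only [hall, true_and]
    exact natCard_le_natCard_and_natCard_le_natCard_add_one h

end Count

section LeftNhds

variable {ι α : Type*} [LinearOrder α] [TopologicalSpace α] [OrderTopology α]

theorem eventually_nhdsLT_forall_lt_of_finite {t : ι → α} {y : α} {I : Set ι} (hI : I.Finite)
    (hy : ∀ m ∈ I, t m < y) : ∀ᶠ s in 𝓝[<] y, ∀ m ∈ I, t m < s :=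
  (eventually_all_finite hI).2 fun m hm => by
    filter_upwards [Ioo_mem_nhdsLT (hy m hm)] with s hs using hs.1

theorem StrictMono.eventually_nhdsLT_le_iff_lt {x : ℕ → α} (hx : StrictMono x) (n : ℕ) :
    ∀ᶠ s in 𝓝[<] x n, ∀ j, x j ≤ s ↔ j < n := by
  filter_upwards [eventually_nhdsLT_forall_lt_of_finite (finite_Iio n) fun j hj => hx hj,
    self_mem_nhdsWithin] with s hs hsn j
  refine ⟨fun hj => ?_, fun hj => (hs j hj).le⟩
  by_contra! hnj
  exact (hx.monotone hnj).not_gt (hj.trans_lt hsn)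

variable {t : ι → α} {y : α}

theorem eventually_nhdsLT_natCard_setOf_le (hfin : {m | t m < y}.Finite) :
    ∀ᶠ s in 𝓝[<] y, Nat.card {m | t m ≤ s} = Nat.card {m | t m < y} := by
  filter_upwards [eventually_nhdsLT_forall_lt_of_finite hfin fun _ hm => hm, self_mem_nhdsWithin]
    with s hs hsy
  congr 2
  ext m
  exact ⟨fun hm => hm.trans_lt hsy, fun hm => (hs m hm).le⟩

theorem eventually_nhdsLT_natCard_setOf_le_eq_zero_or_tendsto (hinf : {m | t m < y}.Infinite) :
    (∀ᶠ s in 𝓝[<] y, Nat.card {m | t m ≤ s} = 0) ∨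
      Tendsto (fun s => Nat.card {m | t m ≤ s}) (𝓝[<] y) atTop := by
  by_cases h : ∃ s₀ < y, {m | t m ≤ s₀}.Infinite
  · obtain ⟨s₀, hs₀y, hs₀⟩ := h
    refine .inl ?_
    filter_upwards [Ioo_mem_nhdsLT hs₀y] with s hs
    exact (hs₀.mono fun m hm => le_trans hm hs.1.le).card_eq_zero
  · push Not at h
    refine .inr (tendsto_atTop.2 fun n => ?_)
    obtain ⟨F, hFsub, hFcard⟩ := hinf.exists_subset_card_eq n
    filter_upwards [eventually_nhdsLT_forall_lt_of_finite F.finite_toSet hFsub,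
      self_mem_nhdsWithin] with s hs hsy
    rw [← hFcard, ← Nat.card_eq_finsetCard]
    exact Nat.card_mono (h s hsy) fun m hm => (hs m hm).le

end LeftNhds

def IsQueueLength (t x : ℕ → ℝ) (D : ℕ → Prop) (Q : ℝ → ℝ) : Prop :=
  ∀ s, Q s = Nat.card {m | t m ≤ s} - Nat.card {j | x j ≤ s ∧ D j}

namespace IsQueueLength

variable {t x : ℕ → ℝ} {D : ℕ → Prop} [DecidablePred D] {Q : ℝ → ℝ}

theorem eventually_nhdsLT_eq (hQ : IsQueueLength t x D Q) (hx : StrictMono x) (k : ℕ) :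
    ∀ᶠ s in 𝓝[<] x k, Q s = Nat.card {m | t m ≤ s} - count D k := by
  filter_upwards [hx.eventually_nhdsLT_le_iff_lt k] with s hs
  rw [hQ, natCard_setOf_le_and_eq_count hs]

theorem leftLim_eq_of_finite (hQ : IsQueueLength t x D Q) (hx : StrictMono x) {k : ℕ}
    (hfin : {m | t m < x k}.Finite) :
    leftLim Q (x k) = Nat.card {m | t m < x k} - count D k := by
  refine leftLim_eq_of_tendsto (tendsto_const_nhds.congr' ?_)
  filter_upwards [hQ.eventually_nhdsLT_eq hx k, eventually_nhdsLT_natCard_setOf_le hfin]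
    with s hQs hAs
  rw [hQs, hAs]

/-- Arrivals accumulating at `x k` make the arrival count the junk value `0` at `x k`; just before
`x k` it is either also `0` or tends to `+∞`, and then `leftLim` falls back to `Q (x k)`. -/
theorem leftLim_nonpos_of_infinite (hQ : IsQueueLength t x D Q) (hx : StrictMono x) {k : ℕ}
    (hinf : {m | t m < x k}.Infinite) : leftLim Q (x k) ≤ 0 := by
  rcases eventually_nhdsLT_natCard_setOf_le_eq_zero_or_tendsto hinf with hzero | htop
  · have : Tendsto Q (𝓝[<] x k) (𝓝 (0 - count D k)) := by
      refine tendsto_const_nhds.congr' ?_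
      filter_upwards [hQ.eventually_nhdsLT_eq hx k, hzero] with s hQs hAs
      rw [hQs, hAs, Nat.cast_zero]
    rw [leftLim_eq_of_tendsto this]
    simp
  · have hQtop : Tendsto Q (𝓝[<] x k) atTop := by
      refine (tendsto_atTop_add_const_right _ (-(count D k : ℝ))
        (tendsto_natCast_atTop_atTop.comp htop)).congr' ?_
      filter_upwards [hQ.eventually_nhdsLT_eq hx k] with s hQs
      rw [hQs, sub_eq_add_neg]
      rfl
    have hA : Nat.card {m | t m ≤ x k} = 0 :=
      (hinf.mono (ofPred_subset_ofPred.2 fun _ => le_of_lt)).card_eq_zero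
    rw [leftLim_eq_of_not_tendsto _ fun ⟨_, h⟩ => not_tendsto_nhds_of_tendsto_atTop hQtop _ h,
      hQ, hA, Nat.cast_zero, zero_sub, neg_nonpos]
    exact Nat.cast_nonneg _

theorem leftLim_pos_iff (hQ : IsQueueLength t x D Q) (hx : StrictMono x) (k : ℕ) :
    0 < leftLim Q (x k) ↔
      {m | t m < x k}.encard ≠ ⊤ ∧ (count D k : ℕ∞) < {m | t m < x k}.encard := by
  rcases Set.finite_or_infinite {m | t m < x k} with hfin | hinf
  · rw [hQ.leftLim_eq_of_finite hx hfin, sub_pos, ← hfin.cast_ncard_eq, ← Nat.card_coe_set_eq]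
    simp
  · simp [hQ.leftLim_nonpos_of_infinite hx hinf, hinf.encard_eq]

theorem eq_count_of_eq_one (hQ : IsQueueLength t x D Q) (ht : StrictMono t) (hx : StrictMono x)
    {i k : ℕ} (hQi : Q (t i) = 1) (hik : t i ≤ x k) (hprev : ∀ j < k, x j < t i) (hk : ¬ D k) :
    i = count D k := by
  have hA : Nat.card {m | t m ≤ t i} = i + 1 := by
    simp_rw [ht.le_iff_le, Set.Iic_def]
    simp [Nat.card_eq_fintype_card]
  have hN : Nat.card {j | x j ≤ t i ∧ D j} = count D k := by
    rw [← natCard_setOf_lt_and]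
    congr 2
    ext j
    refine ⟨fun ⟨hj, hDj⟩ => ⟨?_, hDj⟩, fun ⟨hj, hDj⟩ => ⟨(hprev j hj).le, hDj⟩⟩
    by_contra! hkj
    rcases hkj.lt_or_eq with hkj | rfl
    · exact (hx hkj).not_ge (hj.trans hik)
    · exact hk hDj
  rw [hQ, hA, hN] at hQi
  push_cast at hQi
  exact_mod_cast (by linarith : (i : ℝ) = count D k)

end IsQueueLength

/-- Proposition 2: `0 ≤ Q₃(t) − Q₁(t) ≤ 1` pathwise, where `Q₁` is the
autonomous-service queue and `Q₃` the delayed-departure queue. -/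
theorem stmt_7 (τ χ : ℕ → ℝ) (hτ : ∀ n, 0 < τ n) (hχ : ∀ n, 0 < χ n)
    (tA xD : ℕ → ℝ)
    (htA : ∀ k, tA k = ∑ i ∈ Finset.range (k + 1), τ i)
    (hxD : ∀ k, xD k = ∑ i ∈ Finset.range (k + 1), χ i)
    (A : ℝ → ℕ) (hA : ∀ t, A t = Nat.card {k | tA k ≤ t})
    (Q1 Q3 : ℝ → ℝ)
    (hQ1 : ∀ t, Q1 t = (A t : ℝ) -
      (Nat.card {k | xD k ≤ t ∧ 0 < leftLim Q1 (xD k)} : ℝ))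
    (hQ3 : ∀ t, Q3 t = (A t : ℝ) -
      (Nat.card {k | xD k ≤ t ∧ 0 < leftLim Q3 (xD k) ∧
        ¬ ∃ i, Q3 (tA i) = 1 ∧ tA i ≤ xD k ∧ ∀ k' < k, xD k' < tA i} : ℝ)) :
    ∀ t ≥ (0:ℝ), 0 ≤ Q3 t - Q1 t ∧ Q3 t - Q1 t ≤ 1 := by
  classical
  have ht : StrictMono tA := funext htA ▸ strictMono_sum_range_succ hτ
  have hx : StrictMono xD := funext hxD ▸ strictMono_sum_range_succ hχ
  have hQ1' : IsQueueLength tA xD (fun k => 0 < leftLim Q1 (xD k)) Q1 := fun s => by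
    rw [hQ1, hA]
  have hQ3' : IsQueueLength tA xD (fun k => 0 < leftLim Q3 (xD k) ∧
      ¬ ∃ i, Q3 (tA i) = 1 ∧ tA i ≤ xD k ∧ ∀ k' < k, xD k' < tA i) Q3 := fun s => by
    rw [hQ3, hA]
  have hcount := count_le_count_and_count_le_count_add_one
    (L := fun k => {m | tA m < xD k}.encard)
    (fun _ _ hkl => encard_le_encard fun _ hm => lt_of_lt_of_le hm (hx.monotone hkl))
    (hQ1'.leftLim_pos_iff hx) (fun k => and_congr_left' (hQ3'.leftLim_pos_iff hx k))
    (fun j ⟨i, hQi, hij, hprev⟩ => by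
      rw [← hQ3'.eq_count_of_eq_one ht hx hQi hij hprev fun h => h.2 ⟨i, hQi, hij, hprev⟩]
      exact ht.encard_setOf_lt_le (hprev j j.lt_succ_self).le)
  intro s _
  obtain ⟨h31, h13⟩ := natCard_setOf_le_and_le_and_le_add_one hx.monotone hcount s
  rw [hQ1 s, hQ3 s, sub_sub_sub_cancel_left]
  exact ⟨sub_nonneg.2 (mod_cast h31), sub_le_iff_le_add'.2 (mod_cast h13)⟩
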